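/- arXiv:1805.10221 — 9 statements merged into one kernel-verified Lean document; each statement's English description precedes it below -/
import Mathlib

section
/- Let A be a nonempty closed spherically convex subset of the unit sphere S of a finite-dimensional real inner product space E. If rad A ≥ π/2 (i.e., for every a ∈ A, sup_{b ∈ A} arccos⟨a,b⟩ ≥ π/2; equivalently, for every a ∈ A there exists b ∈ A with ⟨a,b⟩ ≤ 0), then diam A = π; more precisely, there exists a ∈ A such that −a ∈ A. -/
/-!
If `A` has no antipodal pair, spherical convexity makes the open cone `(0, ∞) • A` convex, so
it contains the convex hull of `A`, which is compact (Carathéodory). The point `v = r • a` of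
this hull nearest to the origin satisfies `‖v‖² ≤ ⟪v, w⟫` for every `w` in the hull, so `a` has
positive inner product with every point of `A`, contradicting the radius hypothesis.
-/

open scoped RealInnerProductSpace

/-- A subset of the unit sphere is *spherically convex* (π-convex) if for all
non-antipodal points `x, y` in it, the normalized segment between them stays in it. -/
def SphericallyConvex {E : Type*} [NormedAddCommGroup E] [InnerProductSpace ℝ E]
    (A : Set E) : Prop :=
  ∀ x ∈ A, ∀ y ∈ A, y ≠ -x → ∀ t : ℝ, 0 ≤ t → t ≤ 1 →
    (‖(1 - t) • x + t • y‖)⁻¹ • ((1 - t) • x + t • y) ∈ A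

open Set Pointwise

section ConvexHull

variable {E : Type*} [AddCommGroup E] [Module ℝ E]

theorem convexHull_eq_iUnion_image_stdSimplex [FiniteDimensional ℝ E] (s : Set E) :
    convexHull ℝ s = ⋃ k : Fin (Module.finrank ℝ E + 2),
      (fun p : (Fin k → ℝ) × (Fin k → E) => ∑ i, p.1 i • p.2 i) ''
        (stdSimplex ℝ (Fin k) ×ˢ univ.pi fun _ => s) := by
  refine subset_antisymm (fun x hx => ?_) (iUnion_subset fun k => ?_)
  · obtain ⟨ι, _, z, w, hzs, hind, hw, hw₁, rfl⟩ := eq_pos_convex_span_of_mem_convexHull hx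
    have hcard : Fintype.card ι < Module.finrank ℝ E + 2 :=
      Nat.lt_succ_of_le <| hind.card_le_finrank_succ.trans <|
        Nat.succ_le_succ (Submodule.finrank_le _)
    let e := (Fintype.equivFin ι).symm
    refine mem_iUnion.2 ⟨⟨_, hcard⟩, ⟨w ∘ e, z ∘ e⟩, ⟨⟨fun i => (hw _).le, ?_⟩, ?_⟩, ?_⟩
    · simpa only [Function.comp_apply, e.sum_comp] using hw₁
    · exact fun i _ => hzs (mem_range_self _)
    · exact e.sum_comp fun i => w i • z i
  · rintro _ ⟨⟨w, z⟩, ⟨hw, hz⟩, rfl⟩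
    exact (convex_convexHull ℝ s).sum_mem (fun i _ => hw.1 i) hw.2
      fun i _ => subset_convexHull ℝ s (hz i (mem_univ i))

theorem IsCompact.convexHull [TopologicalSpace E] [IsTopologicalAddGroup E]
    [ContinuousSMul ℝ E] [FiniteDimensional ℝ E] {s : Set E} (hs : IsCompact s) :
    IsCompact (convexHull ℝ s) := by
  rw [convexHull_eq_iUnion_image_stdSimplex]
  exact isCompact_iUnion fun k =>
    ((isCompact_stdSimplex (𝕜 := ℝ) (ι := Fin k)).prod (isCompact_univ_pi fun _ => hs)).image
      (by fun_prop)

end ConvexHull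

section Sphere

variable {E : Type*}

theorem smul_add_smul_ne_zero_of_ne_neg [NormedAddCommGroup E] [NormedSpace ℝ E] {x y : E}
    (hx : ‖x‖ = 1) (hy : ‖y‖ = 1) (hxy : y ≠ -x) {r q : ℝ} (hr : 0 < r) (hq : 0 < q) :
    r • x + q • y ≠ 0 := by
  intro h
  have hrq : r = q := by
    simpa [norm_smul, hx, hy, abs_of_pos hr, abs_of_pos hq] using
      congrArg norm (eq_neg_of_add_eq_zero_left h)
  subst hrq
  rw [← smul_add, smul_eq_zero, add_eq_zero_iff_eq_neg'] at h
  exact hxy (h.resolve_left hr.ne')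

variable [NormedAddCommGroup E] [InnerProductSpace ℝ E] {A : Set E}

theorem SphericallyConvex.smul_add_smul_mem (hconv : SphericallyConvex A)
    (hA : A ⊆ Metric.sphere 0 1) {x y : E} (hx : x ∈ A) (hy : y ∈ A) (hxy : y ≠ -x)
    {r q : ℝ} (hr : 0 < r) (hq : 0 < q) : r • x + q • y ∈ Ioi (0 : ℝ) • A := by
  set t := q / (r + q)
  set p := (1 - t) • x + t • y
  have hq' : (r + q) * t = q := mul_div_cancel₀ q (by positivity)
  have hr' : (r + q) * (1 - t) = r := by rw [mul_one_sub, hq']; ring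
  have hrq : r • x + q • y = (r + q) • p := by rw [smul_add, smul_smul, smul_smul, hr', hq']
  have hp : p ≠ 0 := by
    rintro hp
    refine smul_add_smul_ne_zero_of_ne_neg (mem_sphere_zero_iff_norm.1 (hA hx))
      (mem_sphere_zero_iff_norm.1 (hA hy)) hxy hr hq ?_
    rw [hrq, hp, smul_zero]
  refine ⟨(r + q) * ‖p‖, mul_pos (by positivity) (norm_pos_iff.2 hp), ‖p‖⁻¹ • p,
    hconv x hx y hy hxy t (by positivity) (div_le_one_of_le₀ (by linarith) (by positivity)), ?_⟩
  change _ • _ = _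
  rw [hrq, smul_smul, mul_assoc, mul_inv_cancel₀ (norm_ne_zero_iff.2 hp), mul_one]

theorem SphericallyConvex.convex_Ioi_smul (hconv : SphericallyConvex A)
    (hA : A ⊆ Metric.sphere 0 1) (hanti : ∀ x ∈ A, -x ∉ A) : Convex ℝ (Ioi (0 : ℝ) • A) := by
  rw [convex_iff_forall_pos]
  rintro _ ⟨r, hr, x, hx, rfl⟩ _ ⟨q, hq, y, hy, rfl⟩ a b ha hb -
  rw [smul_smul, smul_smul]
  exact hconv.smul_add_smul_mem hA hx hy (fun h => hanti x hx (h ▸ hy))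
    (mul_pos ha hr) (mul_pos hb hq)

theorem SphericallyConvex.exists_neg_mem [FiniteDimensional ℝ E] (hconv : SphericallyConvex A)
    (hA : A ⊆ Metric.sphere 0 1) (hne : A.Nonempty) (hclosed : IsClosed A)
    (hrad : ∀ a ∈ A, ∃ b ∈ A, ⟪a, b⟫ ≤ 0) : ∃ a ∈ A, -a ∈ A := by
  by_contra! hanti
  have hK : IsCompact (convexHull ℝ A) :=
    ((isCompact_sphere 0 1).of_isClosed_subset hclosed hA).convexHull
  obtain ⟨v, hvK, hv⟩ := exists_norm_eq_iInf_of_complete_convex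
    (hne.mono (subset_convexHull ℝ A)) hK.isComplete (convex_convexHull ℝ A) 0
  have hmin := (norm_eq_iInf_iff_real_inner_le_zero (convex_convexHull ℝ A) hvK).1 hv
  have hAcone : A ⊆ Ioi (0 : ℝ) • A := fun a ha => ⟨1, mem_Ioi.2 one_pos, a, ha, one_smul ℝ a⟩
  obtain ⟨r, hr, a, ha, rfl⟩ := convexHull_min hAcone (hconv.convex_Ioi_smul hA hanti) hvK
  obtain ⟨b, hb, hab⟩ := hrad a ha
  have haa : ⟪a, a⟫ = 1 := by
    rw [real_inner_self_eq_norm_sq, mem_sphere_zero_iff_norm.1 (hA ha), one_pow]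
  have hvb := hmin b (subset_convexHull ℝ A hb)
  rw [zero_sub, inner_neg_left, inner_sub_right, real_inner_smul_left, real_inner_smul_left,
    real_inner_smul_right, haa] at hvb
  nlinarith [mem_Ioi.1 hr]

theorem iSup_iSup_arccos_inner_eq_pi {a : E} (ha : a ∈ A) (hna : -a ∈ A) (ha₁ : ‖a‖ = 1) :
    (⨆ x : A, ⨆ y : A, Real.arccos ⟪(x : E), (y : E)⟫) = Real.pi := by
  have hle : ∀ x y : A, Real.arccos ⟪(x : E), (y : E)⟫ ≤ Real.pi := fun _ _ => Real.arccos_le_pi _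
  have hbdd : ∀ x : A, BddAbove (range fun y : A => Real.arccos ⟪(x : E), (y : E)⟫) :=
    fun x => ⟨_, forall_mem_range.2 (hle x)⟩
  have : Nonempty A := ⟨⟨a, ha⟩⟩
  refine le_antisymm (ciSup_le fun x => ciSup_le (hle x)) ?_
  refine le_ciSup_of_le ⟨_, forall_mem_range.2 fun x => ciSup_le (hle x)⟩ ⟨a, ha⟩ ?_
  refine le_ciSup_of_le (hbdd _) ⟨-a, hna⟩ (le_of_eq ?_)
  rw [inner_neg_right, real_inner_self_eq_norm_sq, ha₁, one_pow, Real.arccos_neg_one]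

end Sphere

theorem convex_radius_ge_half_pi_diam_pi_general
    {E : Type*} [NormedAddCommGroup E] [InnerProductSpace ℝ E] [FiniteDimensional ℝ E]
    (A : Set E) (hA : A ⊆ {x : E | ‖x‖ = 1}) (hne : A.Nonempty)
    (hclosed : IsClosed A) (hconv : SphericallyConvex A)
    (hrad : ∀ a ∈ A, ∃ b ∈ A, ⟪a, b⟫ ≤ 0) :
    (⨆ a : A, ⨆ b : A, Real.arccos ⟪(a : E), (b : E)⟫) = Real.pi ∧
      ∃ a ∈ A, -a ∈ A := by
  have hA' : A ⊆ Metric.sphere 0 1 := fun x hx => mem_sphere_zero_iff_norm.2 (hA hx)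
  obtain ⟨a, ha, hna⟩ := hconv.exists_neg_mem hA' hne hclosed hrad
  exact ⟨iSup_iSup_arccos_inner_eq_pi ha hna (hA ha), a, ha, hna⟩

/-- A nonempty closed spherically convex subset of the unit sphere with radius `≥ π/2`
has diameter `π`; more precisely, it contains a pair of antipodal points. -/
theorem convex_radius_ge_half_pi_diam_pi
    {E : Type*} [NormedAddCommGroup E] [InnerProductSpace ℝ E] [FiniteDimensional ℝ E]
    (hdim : 1 ≤ Module.finrank ℝ E)
    (A : Set E) (hA : A ⊆ {x : E | ‖x‖ = 1}) (hne : A.Nonempty)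
    (hclosed : IsClosed A) (hconv : SphericallyConvex A)
    (hrad : ∀ a ∈ A, ∃ b ∈ A, ⟪a, b⟫ ≤ 0) :
    (⨆ a : A, ⨆ b : A, Real.arccos ⟪(a : E), (b : E)⟫) = Real.pi ∧
      ∃ a ∈ A, -a ∈ A :=
  convex_radius_ge_half_pi_diam_pi_general A hA hne hclosed hconv hrad
end

section
/- Let A be a nonempty closed spherically convex subset of the unit sphere S of a finite-dimensional real inner product space E. Then rad A < π/2 (i.e., there exists a ∈ A with sup_{b ∈ A} arccos⟨a,b⟩ < π/2) if and only if A lies in an open hemisphere, i.e., there exists a unit vector v ∈ E with ⟨v,a⟩ > 0 for all a ∈ A. -/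
open scoped RealInnerProductSpace

/-!
Spherical convexity makes the truncated cone `[0,1] • A` convex. If `A` lies in an open
hemisphere, cutting this cone by a half-space that contains `A` but not `0` leaves a compact
convex set; its point `m = ‖m‖ • a` nearest to the origin satisfies `‖m‖² ≤ ⟪m, x⟫` on it,
so `⟪a, b⟫ ≥ ‖m‖ > 0` for all `b ∈ A`, i.e. `A` lies within `arccos ‖m‖ < π/2` of `a`.
-/

section

open Set Pointwise

variable {E : Type*} [NormedAddCommGroup E] [InnerProductSpace ℝ E]

theorem exists_mem_forall_norm_sq_le_inner {K : Set E} (hne : K.Nonempty) (hc : IsComplete K)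
    (hK : Convex ℝ K) : ∃ m ∈ K, ∀ x ∈ K, ‖m‖ ^ 2 ≤ ⟪m, x⟫ := by
  obtain ⟨m, hm, hmin⟩ := exists_norm_eq_iInf_of_complete_convex hne hc hK 0
  refine ⟨m, hm, fun x hx => ?_⟩
  have hvar := (norm_eq_iInf_iff_real_inner_le_zero hK hm).1 hmin x hx
  rw [zero_sub, inner_neg_left, inner_sub_right, real_inner_self_eq_norm_sq] at hvar
  linarith

namespace SphericallyConvex

variable {A : Set E} {x y : E}

theorem sub_smul_add_smul_mem_Ici_smul (hA : SphericallyConvex A) (hx : x ∈ A) (hy : y ∈ A)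
    {t : ℝ} (ht₀ : 0 ≤ t) (ht₁ : t ≤ 1) : (1 - t) • x + t • y ∈ Ici (0 : ℝ) • A := by
  by_cases hxy : y = -x
  · subst hxy
    have hcomb : (1 - t) • x + t • -x = (1 - 2 * t) • x := by module
    rcases le_total t (1 / 2) with ht | ht
    · exact hcomb ▸ smul_mem_smul (mem_Ici.2 (by linarith)) hx
    · rw [hcomb, show (1 - 2 * t) • x = (2 * t - 1) • -x by module]
      exact smul_mem_smul (mem_Ici.2 (by linarith)) hy
  · set w := (1 - t) • x + t • y
    by_cases hw : w = 0
    · rw [hw, ← zero_smul ℝ x]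
      exact smul_mem_smul self_mem_Ici hx
    · rw [← smul_inv_smul₀ (norm_ne_zero_iff.2 hw) w]
      exact smul_mem_smul (mem_Ici.2 (norm_nonneg w)) (hA x hx y hy hxy t ht₀ ht₁)

theorem smul_add_smul_mem_Ici_smul (hA : SphericallyConvex A) (hx : x ∈ A) (hy : y ∈ A)
    {α β : ℝ} (hα : 0 ≤ α) (hβ : 0 ≤ β) : α • x + β • y ∈ Ici (0 : ℝ) • A := by
  rcases (add_nonneg hα hβ).eq_or_lt with hαβ | hαβ
  · obtain ⟨rfl, rfl⟩ : α = 0 ∧ β = 0 := ⟨by linarith, by linarith⟩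
    rw [zero_smul, zero_smul, add_zero, ← zero_smul ℝ x]
    exact smul_mem_smul self_mem_Ici hx
  · set t := β / (α + β)
    have hcomb : α • x + β • y = (α + β) • ((1 - t) • x + t • y) := by
      rw [smul_add, smul_smul, smul_smul, mul_sub, mul_one, mul_div_cancel₀ _ hαβ.ne']
      congr 2
      ring
    obtain ⟨ρ, hρ, a, ha, hρa⟩ := hA.sub_smul_add_smul_mem_Ici_smul hx hy (t := t)
      (div_nonneg hβ hαβ.le) ((div_le_one hαβ).2 (by linarith))
    rw [hcomb, ← hρa, smul_smul]
    exact smul_mem_smul (mem_Ici.2 (mul_nonneg hαβ.le hρ)) ha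

theorem convex_Icc_smul (hA : SphericallyConvex A) (hS : A ⊆ Metric.sphere 0 1) :
    Convex ℝ (Icc (0 : ℝ) 1 • A) := by
  rintro _ ⟨r, ⟨hr₀, hr₁⟩, a, ha, rfl⟩ _ ⟨s, ⟨hs₀, hs₁⟩, b, hb, rfl⟩ p q hp hq hpq
  rw [smul_smul, smul_smul]
  obtain ⟨ρ, hρ, c, hc, hρc⟩ :=
    hA.smul_add_smul_mem_Ici_smul ha hb (mul_nonneg hp hr₀) (mul_nonneg hq hs₀)
  have hnorm : ρ = ‖(p * r) • a + (q * s) • b‖ := by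
    rw [← hρc, norm_smul, mem_sphere_zero_iff_norm.1 (hS hc), mul_one, Real.norm_of_nonneg hρ]
  have hρ₁ : ρ ≤ 1 := by
    refine hnorm ▸ (norm_add_le _ _).trans ?_
    rw [norm_smul, norm_smul, mem_sphere_zero_iff_norm.1 (hS ha),
      mem_sphere_zero_iff_norm.1 (hS hb), Real.norm_of_nonneg (mul_nonneg hp hr₀),
      Real.norm_of_nonneg (mul_nonneg hq hs₀)]
    nlinarith
  exact hρc ▸ smul_mem_smul ⟨hρ, hρ₁⟩ hc

theorem exists_forall_le_inner (hA : SphericallyConvex A) (hS : A ⊆ Metric.sphere 0 1)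
    (hAc : IsCompact A) (hne : A.Nonempty) {v : E} (hv : ∀ a ∈ A, 0 < ⟪v, a⟫) :
    ∃ a ∈ A, ∃ δ > 0, ∀ b ∈ A, δ ≤ ⟪a, b⟫ := by
  have hcont : Continuous fun x : E => ⟪v, x⟫ := continuous_const.inner continuous_id
  obtain ⟨a₀, ha₀, hmin⟩ := hAc.exists_isMinOn hne hcont.continuousOn
  set K := (Icc (0 : ℝ) 1 • A) ∩ {x | ⟪v, a₀⟫ ≤ ⟪v, x⟫}
  have hAK : A ⊆ K := fun a ha =>
    ⟨⟨1, ⟨zero_le_one, le_rfl⟩, a, ha, one_smul ℝ a⟩, hmin ha⟩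
  have hKc : IsCompact K :=
    (isCompact_Icc.smul_set hAc).inter_right (isClosed_le continuous_const hcont)
  have hKconv : Convex ℝ K :=
    (hA.convex_Icc_smul hS).inter (convex_halfSpace_ge (innerₛₗ ℝ v).isLinear _)
  obtain ⟨_, ⟨⟨r, ⟨hr₀, -⟩, a, ha, rfl⟩, hvm⟩, hm⟩ :=
    exists_mem_forall_norm_sq_le_inner (hne.mono hAK) hKc.isComplete hKconv
  have hr : 0 < r := by
    have hvr : 0 < r * ⟪v, a⟫ := by
      rw [← real_inner_smul_right]
      exact (hv a₀ ha₀).trans_le hvm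
    exact pos_of_mul_pos_left hvr (hv a ha).le
  refine ⟨a, ha, r, hr, fun b hb => ?_⟩
  have hmb : ‖r • a‖ ^ 2 ≤ ⟪r • a, b⟫ := hm b (hAK hb)
  rw [norm_smul, mem_sphere_zero_iff_norm.1 (hS ha), mul_one, Real.norm_of_nonneg hr₀,
    real_inner_smul_left, sq] at hmb
  exact le_of_mul_le_mul_left hmb hr

end SphericallyConvex

end

theorem radius_lt_half_pi_iff_open_hemisphere_general
    {E : Type*} [NormedAddCommGroup E] [InnerProductSpace ℝ E] [FiniteDimensional ℝ E]
    (A : Set E) (hA : A ⊆ {x : E | ‖x‖ = 1}) (hne : A.Nonempty)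
    (hclosed : IsClosed A) (hconv : SphericallyConvex A) :
    (∃ a ∈ A, (⨆ b : A, Real.arccos ⟪a, (b : E)⟫) < Real.pi / 2) ↔
      ∃ v : E, ‖v‖ = 1 ∧ ∀ a ∈ A, 0 < ⟪v, a⟫ := by
  have hS : A ⊆ Metric.sphere 0 1 := fun a ha => mem_sphere_zero_iff_norm.2 (hA ha)
  constructor
  · rintro ⟨a, ha, hsup⟩
    have hbdd : BddAbove (Set.range fun b : A => Real.arccos ⟪a, (b : E)⟫) :=
      ⟨Real.pi, by rintro _ ⟨b, rfl⟩; exact Real.arccos_le_pi _⟩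
    exact ⟨a, hA ha, fun b hb =>
      Real.arccos_lt_pi_div_two.1 ((le_ciSup hbdd ⟨b, hb⟩).trans_lt hsup)⟩
  · rintro ⟨v, -, hv⟩
    have hAc : IsCompact A :=
      (isCompact_sphere (0 : E) 1).of_isClosed_subset hclosed hS
    obtain ⟨a, ha, δ, hδ, hδa⟩ := hconv.exists_forall_le_inner hS hAc hne hv
    have : Nonempty A := hne.to_subtype
    exact ⟨a, ha, (ciSup_le fun b : A => Real.arccos_le_arccos (hδa b b.2)).trans_lt
      (Real.arccos_lt_pi_div_two.2 hδ)⟩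

/-- A nonempty closed spherically convex subset of the unit sphere has radius `< π/2`
if and only if it lies in an open hemisphere. -/
theorem radius_lt_half_pi_iff_open_hemisphere
    {E : Type*} [NormedAddCommGroup E] [InnerProductSpace ℝ E] [FiniteDimensional ℝ E]
    (hdim : 1 ≤ Module.finrank ℝ E)
    (A : Set E) (hA : A ⊆ {x : E | ‖x‖ = 1}) (hne : A.Nonempty)
    (hclosed : IsClosed A) (hconv : SphericallyConvex A) :
    (∃ a ∈ A, (⨆ b : A, Real.arccos ⟪a, (b : E)⟫) < Real.pi / 2) ↔
      ∃ v : E, ‖v‖ = 1 ∧ ∀ a ∈ A, 0 < ⟪v, a⟫ :=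
  radius_lt_half_pi_iff_open_hemisphere_general A hA hne hclosed hconv
end

section
/- Let A be a closed spherically convex subset of the unit sphere S of a finite-dimensional real inner product space E, and assume A ≠ S. Then A lies in a closed hemisphere: there exists a unit vector v ∈ E with ⟨v,a⟩ ≥ 0 for all a ∈ A. -/
open scoped RealInnerProductSpace

/-!
The rays through `A` form a cone `coneOver A` which is convex by spherical convexity of `A`
and closed because `A` is. A unit vector outside `A` lies outside this cone, so Farkas' lemma
gives a hyperplane through the origin with the whole cone, hence `A`, on one side.
-/

open NormedSpace Metric

section

variable {E : Type*} [NormedAddCommGroup E] [NormedSpace ℝ E] {A : Set E}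

def coneOver (A : Set E) : Set E := {w | w ≠ 0 → NormedSpace.normalize w ∈ A}

lemma zero_mem_coneOver : (0 : E) ∈ coneOver A := fun h ↦ absurd rfl h

lemma subset_coneOver (hA : A ⊆ sphere 0 1) : A ⊆ coneOver A := fun a ha _ ↦ by
  rwa [normalize_eq_self_of_norm_eq_one (mem_sphere_zero_iff_norm.1 (hA ha))]

lemma mem_of_mem_coneOver {x : E} (hx : ‖x‖ = 1) (h : x ∈ coneOver A) : x ∈ A := by
  simpa [normalize_eq_self_of_norm_eq_one hx] using h (by rintro rfl; simp at hx)

lemma smul_mem_coneOver {w : E} (hw : w ∈ coneOver A) {c : ℝ} (hc : 0 ≤ c) :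
    c • w ∈ coneOver A := by
  intro hcw
  have hc : 0 < c := hc.lt_of_ne (by rintro rfl; simp at hcw)
  rw [normalize_smul_of_pos hc]
  exact hw (by rintro rfl; simp at hcw)

lemma isClosed_coneOver (hclosed : IsClosed A) : IsClosed (coneOver A) := by
  have hcompl : (coneOver A)ᶜ = {0}ᶜ ∩ NormedSpace.normalize ⁻¹' Aᶜ := by
    ext w; simp [coneOver, and_comm]
  have hcont : ContinuousOn (NormedSpace.normalize : E → E) {0}ᶜ := fun w hw ↦
    ((continuous_norm.continuousAt.inv₀ (norm_ne_zero_iff.2 hw)).smul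
      continuousAt_id).continuousWithinAt
  rw [← isOpen_compl_iff, hcompl]
  exact hcont.isOpen_inter_preimage isOpen_compl_singleton hclosed.isOpen_compl

end

section

variable {E : Type*} [NormedAddCommGroup E] [InnerProductSpace ℝ E] {A : Set E}

lemma SphericallyConvex.normalize_add_mem (hA : A ⊆ sphere 0 1) (hconv : SphericallyConvex A)
    {x y : E} (hx : x ∈ A) (hy : y ∈ A) {α β : ℝ} (hα : 0 ≤ α) (hβ : 0 ≤ β)
    (hne : α • x + β • y ≠ 0) : NormedSpace.normalize (α • x + β • y) ∈ A := by
  by_cases hyx : y = -x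
  · -- On an antipodal pair the combination is a multiple of `x` or of `y`.
    subst hyx
    have hnorm : ‖x‖ = 1 := mem_sphere_zero_iff_norm.1 (hA hx)
    rcases lt_or_ge α β with hlt | hle
    · have hcomb : α • x + β • -x = (β - α) • -x := by module
      rw [hcomb, normalize_smul_of_pos (sub_pos.2 hlt), normalize_neg,
        normalize_eq_self_of_norm_eq_one hnorm]
      exact hy
    · have hcomb : α • x + β • -x = (α - β) • x := by module
      rw [hcomb] at hne ⊢
      have hpos : 0 < α - β := (sub_nonneg.2 hle).lt_of_ne (by rintro h; simp [← h] at hne)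
      rw [normalize_smul_of_pos hpos, normalize_eq_self_of_norm_eq_one hnorm]
      exact hx
  · have hs : 0 < α + β := (add_nonneg hα hβ).lt_of_ne (by
      rintro h
      obtain ⟨rfl, rfl⟩ : α = 0 ∧ β = 0 := by constructor <;> linarith
      simp at hne)
    have hcomb : α • x + β • y = (α + β) • ((1 - β / (α + β)) • x + (β / (α + β)) • y) := by
      rw [one_sub_div hs.ne', add_sub_cancel_right, smul_add, smul_smul, smul_smul,
        mul_div_cancel₀ _ hs.ne', mul_div_cancel₀ _ hs.ne']
    rw [hcomb, normalize_smul_of_pos hs]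
    exact hconv x hx y hy hyx _ (div_nonneg hβ hs.le)
      ((div_le_one hs).2 (le_add_of_nonneg_left hα))

lemma SphericallyConvex.add_mem_coneOver (hA : A ⊆ sphere 0 1) (hconv : SphericallyConvex A)
    {v w : E} (hv : v ∈ coneOver A) (hw : w ∈ coneOver A) : v + w ∈ coneOver A := by
  rcases eq_or_ne v 0 with rfl | hv0
  · simpa using hw
  rcases eq_or_ne w 0 with rfl | hw0
  · simpa using hv
  intro hvw
  rw [← norm_smul_normalize v, ← norm_smul_normalize w] at hvw ⊢
  exact hconv.normalize_add_mem hA (hv hv0) (hw hw0) (norm_nonneg v) (norm_nonneg w) hvw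

def SphericallyConvex.properCone (hA : A ⊆ sphere 0 1) (hconv : SphericallyConvex A)
    (hclosed : IsClosed A) : ProperCone ℝ E where
  carrier := coneOver A
  add_mem' := hconv.add_mem_coneOver hA
  zero_mem' := zero_mem_coneOver
  smul_mem' c _ hw := smul_mem_coneOver hw c.2
  isClosed' := isClosed_coneOver hclosed

end

theorem convex_proper_subset_closed_hemisphere_general
    {E : Type*} [NormedAddCommGroup E] [InnerProductSpace ℝ E] [FiniteDimensional ℝ E]
    (A : Set E) (hA : A ⊆ {x : E | ‖x‖ = 1})
    (hclosed : IsClosed A) (hconv : SphericallyConvex A)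
    (hproper : A ≠ {x : E | ‖x‖ = 1}) :
    ∃ v : E, ‖v‖ = 1 ∧ ∀ a ∈ A, 0 ≤ ⟪v, a⟫ := by
  have hA' : A ⊆ sphere 0 1 := fun a ha ↦ mem_sphere_zero_iff_norm.2 (hA ha)
  obtain ⟨x, hx, hxA⟩ : ∃ x : E, ‖x‖ = 1 ∧ x ∉ A := by
    by_contra! h
    exact hproper (hA.antisymm h)
  have hxC : x ∉ hconv.properCone hA' hclosed := fun h ↦ hxA (mem_of_mem_coneOver hx h)
  obtain ⟨y, hyC, hxy⟩ := (hconv.properCone hA' hclosed).hyperplane_separation' hxC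
  have hy : y ≠ 0 := by rintro rfl; simp at hxy
  refine ⟨NormedSpace.normalize y, norm_normalize hy, fun a ha ↦ ?_⟩
  rw [NormedSpace.normalize, real_inner_smul_left, real_inner_comm]
  exact mul_nonneg (inv_nonneg.2 (norm_nonneg y)) (hyC a (subset_coneOver hA' ha))

/-- A closed spherically convex proper subset of the unit sphere lies in a
closed hemisphere. -/
theorem convex_proper_subset_closed_hemisphere
    {E : Type*} [NormedAddCommGroup E] [InnerProductSpace ℝ E] [FiniteDimensional ℝ E]
    (hdim : 1 ≤ Module.finrank ℝ E)
    (A : Set E) (hA : A ⊆ {x : E | ‖x‖ = 1})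
    (hclosed : IsClosed A) (hconv : SphericallyConvex A)
    (hproper : A ≠ {x : E | ‖x‖ = 1}) :
    ∃ v : E, ‖v‖ = 1 ∧ ∀ a ∈ A, 0 ≤ ⟪v, a⟫ :=
  convex_proper_subset_closed_hemisphere_general A hA hclosed hconv hproper
end

section
/- Let A be a nonempty closed subset of the unit sphere S of a finite-dimensional real inner product space E, and let v ∈ E be a unit vector with ⟨v,a⟩ ≥ 0 for all a ∈ A (so A lies in the closed hemisphere H determined by v). Suppose that either A ∩ v^⊥ = ∅, or there exists c ∈ A ∩ v^⊥ with ⟨c,b⟩ > 0 for every b ∈ A ∩ v^⊥ (i.e., the radius of A ∩ ∂H is < π/2). Then A lies in an open hemisphere: there exists a unit vector w ∈ E with ⟨w,a⟩ > 0 for all a ∈ A. -/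
/-!
Tilt `v` towards `c`: take `w` proportional to `v + ε • c`. Where `⟪c, a⟫ > 0` this only helps;
the part of `A` where `⟪c, a⟫ ≤ 0` is compact and misses `v^⊥`, so `⟪v, a⟫` is bounded below there
by a positive constant, which a small enough `ε` cannot cancel.
-/

open scoped RealInnerProductSpace

theorem IsCompact.exists_pos_forall_add_mul_pos {X : Type*} [TopologicalSpace X] {K : Set X}
    (hK : IsCompact K) {f g : X → ℝ} (hf : Continuous f) (hg : Continuous g)
    (hf0 : ∀ x ∈ K, 0 ≤ f x) (hfg : ∀ x ∈ K, f x = 0 → 0 < g x) :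
    ∃ ε > 0, ∀ x ∈ K, 0 < f x + ε * g x := by
  set K' := K ∩ {x | g x ≤ 0}
  have hK' : IsCompact K' := hK.inter_right (isClosed_le hg continuous_const)
  have hf_pos : ∀ x ∈ K', 0 < f x := fun x ⟨hx, hgx⟩ =>
    (hf0 x hx).lt_of_ne fun h => (hfg x hx h.symm).not_ge hgx
  obtain ⟨m, hm, hfm⟩ := hK'.exists_forall_le' hf.continuousOn hf_pos
  obtain ⟨L, hL⟩ := hK.bddBelow_image hg.continuousOn
  refine ⟨m / (2 * (|L| + 1)), by positivity, fun x hx => ?_⟩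
  have hgx : -(|L| + 1) ≤ g x := by
    linarith [hL (Set.mem_image_of_mem g hx), neg_abs_le L]
  have hε : m / (2 * (|L| + 1)) * (|L| + 1) = m / 2 := by field_simp
  by_cases hgx0 : g x ≤ 0
  · have hmfx := hfm x ⟨hx, hgx0⟩
    nlinarith [mul_le_mul_of_nonneg_left hgx (by positivity : 0 ≤ m / (2 * (|L| + 1)))]
  · have hεg : 0 < m / (2 * (|L| + 1)) * g x := mul_pos (by positivity) (not_le.mp hgx0)
    linarith [hf0 x hx]

theorem closed_hemisphere_to_open_hemisphere_general
    {E : Type*} [NormedAddCommGroup E] [InnerProductSpace ℝ E] [FiniteDimensional ℝ E]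
    (A : Set E) (hA : A ⊆ {x : E | ‖x‖ = 1}) (hclosed : IsClosed A)
    (v : E) (hv : ‖v‖ = 1) (hhemi : ∀ a ∈ A, 0 ≤ ⟪v, a⟫)
    (hbdry : (∀ a ∈ A, ⟪v, a⟫ ≠ 0) ∨
      (∃ c ∈ A, ⟪v, c⟫ = 0 ∧ ∀ b ∈ A, ⟪v, b⟫ = 0 → 0 < ⟪c, b⟫)) :
    ∃ w : E, ‖w‖ = 1 ∧ ∀ a ∈ A, 0 < ⟪w, a⟫ := by
  rcases hbdry with hoff | ⟨c, -, hvc, hcpos⟩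
  · exact ⟨v, hv, fun a ha => (hhemi a ha).lt_of_ne (hoff a ha).symm⟩
  have hAcpt : IsCompact A := (isCompact_sphere (0 : E) 1).of_isClosed_subset hclosed
    fun x hx => mem_sphere_zero_iff_norm.mpr (hA hx)
  obtain ⟨ε, -, hpos⟩ := hAcpt.exists_pos_forall_add_mul_pos
    (continuous_const.inner continuous_id) (continuous_const.inner continuous_id) hhemi hcpos
  set u := v + ε • c
  have hu : u ≠ 0 := fun h => by
    simpa [u, inner_add_right, real_inner_smul_right, hvc, real_inner_self_eq_norm_sq, hv]
      using congrArg (⟪v, ·⟫) h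
  refine ⟨‖u‖⁻¹ • u, norm_smul_inv_norm hu, fun a ha => ?_⟩
  rw [real_inner_smul_left, inner_add_left, real_inner_smul_left]
  exact mul_pos (inv_pos.mpr (norm_pos_iff.mpr hu)) (hpos a ha)

/-- Let `A` be a nonempty closed subset of the unit sphere contained in the closed
hemisphere determined by a unit vector `v`.  If either `A` misses the boundary great
sphere `v^⊥`, or there is a point `c ∈ A ∩ v^⊥` whose inner product with every point
of `A ∩ v^⊥` is positive (radius of `A ∩ ∂H` less than `π/2`), then `A` lies in an
open hemisphere. -/
theorem closed_hemisphere_to_open_hemisphere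
    {E : Type*} [NormedAddCommGroup E] [InnerProductSpace ℝ E] [FiniteDimensional ℝ E]
    (A : Set E) (hA : A ⊆ {x : E | ‖x‖ = 1}) (hne : A.Nonempty) (hclosed : IsClosed A)
    (v : E) (hv : ‖v‖ = 1) (hhemi : ∀ a ∈ A, 0 ≤ ⟪v, a⟫)
    (hbdry : (∀ a ∈ A, ⟪v, a⟫ ≠ 0) ∨
      (∃ c ∈ A, ⟪v, c⟫ = 0 ∧ ∀ b ∈ A, ⟪v, b⟫ = 0 → 0 < ⟪c, b⟫)) :
    ∃ w : E, ‖w‖ = 1 ∧ ∀ a ∈ A, 0 < ⟪w, a⟫ :=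
  closed_hemisphere_to_open_hemisphere_general A hA hclosed v hv hhemi hbdry
end

section
/- Let n ≥ 2 and let u, v be unit vectors in Euclidean space ℝ^{n+1} with v ≠ −u. The Alexandrov lens L = {x ∈ ℝ^{n+1} : ‖x‖ = 1, ⟨x,u⟩ ≥ 0, ⟨x,v⟩ ≥ 0} has maximal radius: inf_{x ∈ L} sup_{y ∈ L} arccos⟨x,y⟩ = π/2. Moreover the infimum is attained at the soul point s = (u+v)/‖u+v‖, i.e., arccos⟨s,y⟩ ≤ π/2 for all y ∈ L, and there exists y ∈ L with ⟨s,y⟩ = 0. -/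
open scoped RealInnerProductSpace

/-!
Every point `x` of the lens is at distance at least `π/2` from one of `± w`, where `w` is a
unit vector orthogonal to `u` and `v` (it exists because `n + 1 > 2`); both `± w` lie in the
lens. Conversely the soul `s` has `⟪s, y⟫ = ‖u + v‖⁻¹ (⟪u, y⟫ + ⟪v, y⟫) ≥ 0` on the lens,
so it is within `π/2` of every point of the lens.
-/

open Module Real

variable {E : Type*} [NormedAddCommGroup E] [InnerProductSpace ℝ E]

theorem exists_norm_eq_one_forall_inner_eq_zero [FiniteDimensional ℝ E] (t : Finset E)
    (ht : t.card < finrank ℝ E) : ∃ w : E, ‖w‖ = 1 ∧ ∀ x ∈ t, ⟪w, x⟫ = 0 := by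
  set K := Submodule.span ℝ (t : Set E)
  have hK : K ≠ ⊤ := fun hK_top => by
    have : finrank ℝ K ≤ t.card := finrank_span_finset_le_card t
    rw [hK_top, finrank_top] at this
    omega
  obtain ⟨z, hzK, hz⟩ :=
    Submodule.exists_mem_ne_zero_of_ne_bot (mt Submodule.orthogonal_eq_bot_iff.1 hK)
  refine ⟨‖z‖⁻¹ • z, ?_, fun x hx => ?_⟩
  · rw [norm_smul, norm_inv, norm_norm, inv_mul_cancel₀ (norm_ne_zero_iff.2 hz)]
  · rw [real_inner_smul_left,
      (Submodule.mem_orthogonal' K z).1 hzK x (Submodule.subset_span hx), mul_zero]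

theorem Real.pi_div_two_le_arccos {x : ℝ} : π / 2 ≤ arccos x ↔ x ≤ 0 := by
  rw [← not_lt, arccos_lt_pi_div_two, not_lt]

theorem iInf_iSup_arccos_inner_eq_pi_div_two {L : Set E} {s : E} (hs : s ∈ L)
    (hs_nonneg : ∀ y ∈ L, 0 ≤ ⟪s, y⟫) (h_far : ∀ x ∈ L, ∃ y ∈ L, ⟪x, y⟫ ≤ 0) :
    ⨅ x : L, ⨆ y : L, arccos ⟪(x : E), (y : E)⟫ = π / 2 := by
  have : Nonempty L := ⟨⟨s, hs⟩⟩
  have hbdd (x : L) : BddAbove (Set.range fun y : L => arccos ⟪(x : E), (y : E)⟫) :=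
    ⟨π, by rintro _ ⟨y, rfl⟩; exact arccos_le_pi _⟩
  apply le_antisymm
  · calc ⨅ x : L, ⨆ y : L, arccos ⟪(x : E), (y : E)⟫
        ≤ ⨆ y : L, arccos ⟪s, (y : E)⟫ :=
          ciInf_le ⟨0, by rintro _ ⟨x, rfl⟩; exact Real.iSup_nonneg fun _ => arccos_nonneg _⟩
            (⟨s, hs⟩ : L)
      _ ≤ π / 2 := ciSup_le fun y => arccos_le_pi_div_two.2 (hs_nonneg y y.2)
  · refine le_ciInf fun x => ?_
    obtain ⟨y, hy, hxy⟩ := h_far x x.2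
    exact (pi_div_two_le_arccos.2 hxy).trans (le_ciSup (hbdd x) ⟨y, hy⟩)

theorem real_inner_add_left_nonneg_of_norm_eq {u v : E} (h : ‖u‖ = ‖v‖) : 0 ≤ ⟪u + v, u⟫ := by
  have h_cs := neg_le_of_abs_le (abs_real_inner_le_norm v u)
  rw [← h] at h_cs
  rw [inner_add_left, real_inner_self_eq_norm_sq, sq]
  linarith

def alexandrovLens (u v : E) : Set E := {x | ‖x‖ = 1 ∧ 0 ≤ ⟪x, u⟫ ∧ 0 ≤ ⟪x, v⟫}

noncomputable def alexandrovLens.soul (u v : E) : E := ‖u + v‖⁻¹ • (u + v)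

namespace alexandrovLens

variable {u v w : E}

theorem mem_of_inner_eq_zero (hw : ‖w‖ = 1) (hwu : ⟪w, u⟫ = 0) (hwv : ⟪w, v⟫ = 0) :
    w ∈ alexandrovLens u v :=
  ⟨hw, hwu.ge, hwv.ge⟩

theorem exists_mem_inner_nonpos (hw : ‖w‖ = 1) (hwu : ⟪w, u⟫ = 0) (hwv : ⟪w, v⟫ = 0) (x : E) :
    ∃ y ∈ alexandrovLens u v, ⟪x, y⟫ ≤ 0 := by
  rcases le_total ⟪x, w⟫ 0 with hxw | hxw
  · exact ⟨w, mem_of_inner_eq_zero hw hwu hwv, hxw⟩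
  · refine ⟨-w, mem_of_inner_eq_zero (by rwa [norm_neg]) ?_ ?_, ?_⟩
    · rw [inner_neg_left, hwu, neg_zero]
    · rw [inner_neg_left, hwv, neg_zero]
    · rwa [inner_neg_right, neg_nonpos]

theorem inner_soul_eq_zero (hwu : ⟪w, u⟫ = 0) (hwv : ⟪w, v⟫ = 0) : ⟪soul u v, w⟫ = 0 := by
  rw [soul, real_inner_smul_left, inner_add_left, real_inner_comm w u, real_inner_comm w v, hwu,
    hwv, add_zero, mul_zero]

theorem inner_soul_nonneg {y : E} (hy : y ∈ alexandrovLens u v) : 0 ≤ ⟪soul u v, y⟫ := by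
  rw [soul, real_inner_smul_left, inner_add_left, real_inner_comm y u, real_inner_comm y v]
  exact mul_nonneg (inv_nonneg.2 (norm_nonneg _)) (add_nonneg hy.2.1 hy.2.2)

theorem soul_mem (h : ‖u‖ = ‖v‖) (huv : u + v ≠ 0) : soul u v ∈ alexandrovLens u v := by
  refine ⟨?_, ?_, ?_⟩
  · rw [soul, norm_smul, norm_inv, norm_norm, inv_mul_cancel₀ (norm_ne_zero_iff.2 huv)]
  · rw [soul, real_inner_smul_left]
    exact mul_nonneg (inv_nonneg.2 (norm_nonneg _)) (real_inner_add_left_nonneg_of_norm_eq h)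
  · rw [soul, real_inner_smul_left, add_comm]
    exact mul_nonneg (inv_nonneg.2 (norm_nonneg _)) (real_inner_add_left_nonneg_of_norm_eq h.symm)

end alexandrovLens

/-- The Alexandrov lens `L = {x ∈ Sⁿ : ⟨x,u⟩ ≥ 0, ⟨x,v⟩ ≥ 0}` determined by unit
vectors `u ≠ -v` in `ℝ^{n+1}` (`n ≥ 2`) has maximal radius `π/2`, the infimum being
attained at the soul point `s = (u+v)/‖u+v‖`. -/
theorem lens_radius_eq_half_pi (n : ℕ) (hn : 2 ≤ n)
    (u v : EuclideanSpace ℝ (Fin (n + 1))) (hu : ‖u‖ = 1) (hv : ‖v‖ = 1)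
    (huv : v ≠ -u)
    (L : Set (EuclideanSpace ℝ (Fin (n + 1))))
    (hL : L = {x : EuclideanSpace ℝ (Fin (n + 1)) | ‖x‖ = 1 ∧ 0 ≤ ⟪x, u⟫ ∧ 0 ≤ ⟪x, v⟫})
    (s : EuclideanSpace ℝ (Fin (n + 1))) (hs : s = (‖u + v‖)⁻¹ • (u + v)) :
    (⨅ x : L, ⨆ y : L, Real.arccos ⟪(x : EuclideanSpace ℝ (Fin (n + 1))),
        (y : EuclideanSpace ℝ (Fin (n + 1)))⟫) = Real.pi / 2 ∧
      (∀ y ∈ L, Real.arccos ⟪s, y⟫ ≤ Real.pi / 2) ∧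
      (∃ y ∈ L, ⟪s, y⟫ = 0) := by
  obtain rfl : L = alexandrovLens u v := hL
  obtain rfl : s = alexandrovLens.soul u v := hs
  obtain ⟨w, hw, hw_orth⟩ := exists_norm_eq_one_forall_inner_eq_zero {u, v}
    ((Finset.card_le_two).trans_lt (by rw [finrank_euclideanSpace_fin]; omega))
  have hwu : ⟪w, u⟫ = 0 := hw_orth u (by simp)
  have hwv : ⟪w, v⟫ = 0 := hw_orth v (by simp)
  have hs_mem := alexandrovLens.soul_mem (hu.trans hv.symm)
    fun h => huv (eq_neg_of_add_eq_zero_right h)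
  refine ⟨iInf_iSup_arccos_inner_eq_pi_div_two hs_mem
      (fun _ => alexandrovLens.inner_soul_nonneg)
      (fun x _ => alexandrovLens.exists_mem_inner_nonpos hw hwu hwv x),
    fun y hy => arccos_le_pi_div_two.2 (alexandrovLens.inner_soul_nonneg hy),
    w, alexandrovLens.mem_of_inner_eq_zero hw hwu hwv, alexandrovLens.inner_soul_eq_zero hwu hwv⟩
end

section
/- Let n ≥ 1 and let u, v be unit vectors in Euclidean space ℝ^{n+1} with v ≠ −u. Let B = {x ∈ ℝ^{n+1} : ‖x‖ = 1, ⟨x,u⟩ = 0, ⟨x,v⟩ ≥ 0} ∪ {x ∈ ℝ^{n+1} : ‖x‖ = 1, ⟨x,v⟩ = 0, ⟨x,u⟩ ≥ 0} (the boundary of the Alexandrov lens determined by u and v). Then the (n−1)-dimensional Hausdorff measure of B equals the (n−1)-dimensional Hausdorff measure of the unit sphere S^{n−1} ⊆ ℝ^n: the boundary of a lens has the maximal possible boundary volume, vol S^{n−1}(1). -/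
/-!
For independent `u, v`, the face `{x ∈ Sⁿ ∩ u^⊥ | 0 ≤ ⟪x, v⟫}` is a closed half of the great
sphere `Sⁿ ∩ u^⊥ ≅ S^{n-1}`: on `u^⊥` the functional `⟪·, v⟫` agrees with `⟪·, w⟫` for the
projection `w` of `v` onto `u^⊥`, and the reflection in `w^⊥` preserves the great sphere and
swaps its two halves. The halves, and also the two faces, meet only in the codimension-two sphere
`Sⁿ ∩ {u, v}^⊥ ≅ S^{n-2}`, which is `μH[n-1]`-null. So each face has half the measure of
`S^{n-1}`. When `v = u` both faces are the whole great sphere `Sⁿ ∩ u^⊥`.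
-/

open scoped RealInnerProductSpace EuclideanSpace
open MeasureTheory Metric Module Set Submodule

variable {E : Type*} [NormedAddCommGroup E] [InnerProductSpace ℝ E]

theorem setOf_norm_eq_one_inner_eq_zero_and (u : E) (p : E → Prop) :
    {x : E | ‖x‖ = 1 ∧ ⟪x, u⟫ = 0 ∧ p x} = sphere 0 1 ∩ (ℝ ∙ u)ᗮ ∩ {x | p x} := by
  ext x
  simp [mem_orthogonal_singleton_iff_inner_left, and_assoc]

theorem linearIndependent_pair_of_norm_eq_one {u v : E} (hu : ‖u‖ = 1) (hv : ‖v‖ = 1)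
    (hvu : v ≠ u) (hvu' : v ≠ -u) : LinearIndependent ℝ ![u, v] := by
  rw [LinearIndependent.pair_iff' (norm_ne_zero_iff.mp (hu ▸ one_ne_zero))]
  rintro a rfl
  rw [norm_smul, hu, mul_one, Real.norm_eq_abs] at hv
  rcases (abs_eq zero_le_one).mp hv with rfl | rfl
  · exact hvu (one_smul ℝ u)
  · exact hvu' (neg_one_smul ℝ u)

theorem Submodule.reflection_orthogonal_mem_iff {K L : Submodule ℝ E} [L.HasOrthogonalProjection]
    (hLK : L ≤ K) {x : E} : Lᗮ.reflection x ∈ K ↔ x ∈ K := by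
  rw [reflection_orthogonal_apply, reflection_apply, neg_mem_iff]
  exact K.sub_mem_iff_right (K.nsmul_mem (hLK (L.starProjection_apply_mem x)) 2)

theorem finrank_orthogonal_pair_add_two [FiniteDimensional ℝ E] {u v : E}
    (huv : LinearIndependent ℝ ![u, v]) :
    finrank ℝ ↥((ℝ ∙ u)ᗮ ⊓ (ℝ ∙ v)ᗮ) + 2 = finrank ℝ E := by
  have hspan : finrank ℝ ↥((ℝ ∙ u) ⊔ (ℝ ∙ v)) = 2 := by
    rw [← span_insert, ← Matrix.range_cons_cons_empty u v ![], finrank_span_eq_card huv]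
    simp
  rw [inf_orthogonal, ← hspan, add_comm, finrank_add_finrank_orthogonal]

section Hausdorff

variable [MeasurableSpace E] [BorelSpace E]

theorem hausdorffMeasure_sphere_inter_submodule (K : Submodule ℝ E) (r : ℝ) {d : ℝ} (hd : 0 ≤ d) :
    μH[d] (sphere (0 : E) r ∩ K) = μH[d] (sphere (0 : K) r) := by
  have : sphere (0 : E) r ∩ K = ((↑) : K → E) '' sphere 0 r := by
    ext x
    simp
  rw [this, isometry_subtype_coe.hausdorffMeasure_image (.inl hd)]

theorem hausdorffMeasure_finrank_sphere_eq_zero [FiniteDimensional ℝ E] (x : E) {r : ℝ}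
    (hr : r ≠ 0) : μH[finrank ℝ E] (sphere x r) = 0 := by
  rcases subsingleton_or_nontrivial E with hE | hE
  · simp [sphere_eq_empty_of_subsingleton hr]
  · exact Measure.addHaar_sphere _ x r

theorem hausdorffMeasure_sphere_inter_submodule_eq_zero (K : Submodule ℝ E)
    [FiniteDimensional ℝ K] : μH[finrank ℝ K] (sphere (0 : E) 1 ∩ K) = 0 := by
  rw [hausdorffMeasure_sphere_inter_submodule K 1 (Nat.cast_nonneg _)]
  exact hausdorffMeasure_finrank_sphere_eq_zero 0 one_ne_zero

theorem hausdorffMeasure_sphere_inter_orthogonal_pair_eq_zero {n : ℕ}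
    [Fact (finrank ℝ E = n + 1)] {u v : E} (huv : LinearIndependent ℝ ![u, v]) :
    μH[(n : ℝ) - 1] (sphere (0 : E) 1 ∩ (ℝ ∙ u)ᗮ ∩ {x | ⟪x, v⟫ = 0}) = 0 := by
  have : FiniteDimensional ℝ E := .of_fact_finrank_eq_succ n
  have hset : sphere (0 : E) 1 ∩ (ℝ ∙ u)ᗮ ∩ {x | ⟪x, v⟫ = 0} =
      sphere 0 1 ∩ (((ℝ ∙ u)ᗮ ⊓ (ℝ ∙ v)ᗮ : Submodule ℝ E) : Set E) := by
    ext x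
    simp [mem_orthogonal_singleton_iff_inner_left, and_assoc]
  have hdim : (finrank ℝ ↥((ℝ ∙ u)ᗮ ⊓ (ℝ ∙ v)ᗮ) : ℝ) = n - 1 := by
    have h := congrArg (Nat.cast (R := ℝ)) (finrank_orthogonal_pair_add_two huv)
    rw [Fact.out (p := finrank ℝ E = n + 1)] at h
    push_cast at h
    linarith
  rw [hset, ← hdim]
  exact hausdorffMeasure_sphere_inter_submodule_eq_zero _

theorem hausdorffMeasure_sphere_inter_orthogonal_span_singleton {n : ℕ}
    [Fact (finrank ℝ E = n + 1)] {u : E} (hu : u ≠ 0) {d : ℝ} (hd : 0 ≤ d) :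
    μH[d] (sphere (0 : E) 1 ∩ (ℝ ∙ u)ᗮ) = μH[d] (sphere (0 : EuclideanSpace ℝ (Fin n)) 1) := by
  let e := (OrthonormalBasis.fromOrthogonalSpanSingleton (𝕜 := ℝ) n hu).repr.toIsometryEquiv
  rw [hausdorffMeasure_sphere_inter_submodule _ 1 hd, ← e.hausdorffMeasure_image,
    IsometryEquiv.image_sphere]
  simp [e]

theorem two_mul_hausdorffMeasure_inter_halfspace {d : ℝ} (w : E) {S : Set E}
    (hS : MeasurableSet S) (hSw : (ℝ ∙ w)ᗮ.reflection ⁻¹' S = S)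
    (h0 : μH[d] (S ∩ {x | ⟪x, w⟫ = 0}) = 0) :
    2 * μH[d] (S ∩ {x | 0 ≤ ⟪x, w⟫}) = μH[d] S := by
  set R := (ℝ ∙ w)ᗮ.reflection
  have hRw (x : E) : ⟪R x, w⟫ = -⟪x, w⟫ := by
    calc ⟪R x, w⟫ = ⟪R x, -R w⟫ := by rw [reflection_orthogonalComplement_singleton_eq_neg, neg_neg]
      _ = -⟪x, w⟫ := by rw [inner_neg_right, R.inner_map_map]
  have hflip : μH[d] (S ∩ {x | ⟪x, w⟫ ≤ 0}) = μH[d] (S ∩ {x | 0 ≤ ⟪x, w⟫}) := by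
    have : R ⁻¹' (S ∩ {x | 0 ≤ ⟪x, w⟫}) = S ∩ {x | ⟪x, w⟫ ≤ 0} := by
      rw [preimage_inter, hSw]
      ext x
      simp [hRw]
    rw [← this]
    exact R.toIsometryEquiv.hausdorffMeasure_preimage d _
  have hmeas : MeasurableSet {x : E | ⟪x, w⟫ ≤ 0} :=
    measurableSet_le (by fun_prop) measurable_const
  have hdisj : AEDisjoint μH[d] (S ∩ {x | 0 ≤ ⟪x, w⟫}) (S ∩ {x | ⟪x, w⟫ ≤ 0}) := by
    refine measure_mono_null ?_ h0
    rintro x ⟨⟨hxS, h₁⟩, -, h₂⟩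
    exact ⟨hxS, le_antisymm h₂ h₁⟩
  calc 2 * μH[d] (S ∩ {x | 0 ≤ ⟪x, w⟫})
      = μH[d] (S ∩ {x | 0 ≤ ⟪x, w⟫}) + μH[d] (S ∩ {x | ⟪x, w⟫ ≤ 0}) := by rw [two_mul, hflip]
    _ = μH[d] (S ∩ {x | 0 ≤ ⟪x, w⟫} ∪ S ∩ {x | ⟪x, w⟫ ≤ 0}) :=
      (measure_union₀ (hS.inter hmeas).nullMeasurableSet hdisj).symm
    _ = μH[d] S := by
      have : {x : E | 0 ≤ ⟪x, w⟫} ∪ {x | ⟪x, w⟫ ≤ 0} = univ :=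
        eq_univ_of_forall fun x => le_total 0 ⟪x, w⟫
      rw [← inter_union_distrib_left, this, inter_univ]

theorem two_mul_hausdorffMeasure_sphere_inter_halfspace (K : Submodule ℝ E)
    [FiniteDimensional ℝ K] (v : E) {d : ℝ}
    (h0 : μH[d] (sphere (0 : E) 1 ∩ K ∩ {x | ⟪x, v⟫ = 0}) = 0) :
    2 * μH[d] (sphere (0 : E) 1 ∩ K ∩ {x | 0 ≤ ⟪x, v⟫}) = μH[d] (sphere (0 : E) 1 ∩ K) := by
  have hproj (p : ℝ → Prop) :
      sphere (0 : E) 1 ∩ K ∩ {x | p ⟪x, v⟫} =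
        sphere 0 1 ∩ K ∩ {x | p ⟪x, K.starProjection v⟫} := by
    ext x
    refine and_congr_right fun hx => ?_
    show p ⟪x, v⟫ ↔ p ⟪x, K.starProjection v⟫
    rw [← inner_starProjection_left_eq_right, starProjection_eq_self_iff.mpr hx.2]
  rw [hproj (0 ≤ ·)]
  rw [hproj (· = 0)] at h0
  refine two_mul_hausdorffMeasure_inter_halfspace _
    (isClosed_sphere.inter K.closed_of_finiteDimensional).measurableSet ?_ h0
  have hwK : (ℝ ∙ K.starProjection v) ≤ K :=
    (span_singleton_le_iff_mem _ _).mpr (K.starProjection_apply_mem v)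
  ext x
  simp [reflection_orthogonal_mem_iff hwK]

theorem hausdorffMeasure_half_great_sphere {n : ℕ} [Fact (finrank ℝ E = n + 1)] (hn : 1 ≤ n)
    {u v : E} (huv : LinearIndependent ℝ ![u, v]) :
    μH[(n : ℝ) - 1] (sphere (0 : E) 1 ∩ (ℝ ∙ u)ᗮ ∩ {x | 0 ≤ ⟪x, v⟫}) =
      μH[(n : ℝ) - 1] (sphere (0 : EuclideanSpace ℝ (Fin n)) 1) / 2 := by
  have : FiniteDimensional ℝ E := .of_fact_finrank_eq_succ n
  rw [ENNReal.eq_div_iff two_ne_zero ENNReal.ofNat_ne_top,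
    two_mul_hausdorffMeasure_sphere_inter_halfspace _ _
      (hausdorffMeasure_sphere_inter_orthogonal_pair_eq_zero huv)]
  exact hausdorffMeasure_sphere_inter_orthogonal_span_singleton (huv.ne_zero 0)
    (sub_nonneg.mpr (by exact_mod_cast hn))

end Hausdorff

/-- The boundary of an Alexandrov lens, the union of the two half-great-spheres
`{x ∈ Sⁿ : ⟨x,u⟩ = 0, ⟨x,v⟩ ≥ 0}` and `{x ∈ Sⁿ : ⟨x,v⟩ = 0, ⟨x,u⟩ ≥ 0}` determined by
unit vectors `u ≠ -v` in `ℝ^{n+1}`, has `(n-1)`-dimensional Hausdorff measure equal to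
that of the unit sphere `S^{n-1} ⊆ ℝⁿ`. -/
theorem lens_boundary_maximal_volume (n : ℕ) (hn : 1 ≤ n)
    (u v : EuclideanSpace ℝ (Fin (n + 1))) (hu : ‖u‖ = 1) (hv : ‖v‖ = 1)
    (huv : v ≠ -u) :
    μH[(n : ℝ) - 1]
        ({x : EuclideanSpace ℝ (Fin (n + 1)) | ‖x‖ = 1 ∧ ⟪x, u⟫ = 0 ∧ 0 ≤ ⟪x, v⟫} ∪
          {x : EuclideanSpace ℝ (Fin (n + 1)) | ‖x‖ = 1 ∧ ⟪x, v⟫ = 0 ∧ 0 ≤ ⟪x, u⟫}) =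
      μH[(n : ℝ) - 1] (Metric.sphere (0 : EuclideanSpace ℝ (Fin n)) 1) := by
  rw [setOf_norm_eq_one_inner_eq_zero_and, setOf_norm_eq_one_inner_eq_zero_and]
  rcases eq_or_ne v u with rfl | hvu
  · have : sphere 0 1 ∩ ((ℝ ∙ v)ᗮ : Set _) ⊆ {x | 0 ≤ ⟪x, v⟫} := fun x hx =>
      (mem_orthogonal_singleton_iff_inner_left.mp hx.2).ge
    rw [union_self, inter_eq_left.mpr this]
    exact hausdorffMeasure_sphere_inter_orthogonal_span_singleton
      (norm_ne_zero_iff.mp (by simp [hv])) (sub_nonneg.mpr (by exact_mod_cast hn))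
  have hind := linearIndependent_pair_of_norm_eq_one hu hv hvu huv
  have hdisj : AEDisjoint μH[(n : ℝ) - 1] (sphere 0 1 ∩ (ℝ ∙ u)ᗮ ∩ {x | 0 ≤ ⟪x, v⟫})
      (sphere 0 1 ∩ (ℝ ∙ v)ᗮ ∩ {x | 0 ≤ ⟪x, u⟫}) := by
    refine measure_mono_null ?_ (hausdorffMeasure_sphere_inter_orthogonal_pair_eq_zero hind)
    rintro x ⟨⟨⟨hx, hxu⟩, -⟩, ⟨-, hxv⟩, -⟩
    exact ⟨⟨hx, hxu⟩, mem_orthogonal_singleton_iff_inner_left.mp hxv⟩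
  have hmeas : MeasurableSet (sphere (0 : EuclideanSpace ℝ (Fin (n + 1))) 1 ∩ (ℝ ∙ v)ᗮ ∩
      {x | 0 ≤ ⟪x, u⟫}) :=
    ((isClosed_sphere.inter (ℝ ∙ v).isClosed_orthogonal).inter
      (isClosed_le continuous_const (continuous_id.inner continuous_const))).measurableSet
  rw [measure_union₀ hmeas.nullMeasurableSet hdisj, hausdorffMeasure_half_great_sphere hn hind,
    hausdorffMeasure_half_great_sphere hn (LinearIndependent.pair_symm_iff.mp hind),
    ENNReal.add_halves]
end

section
/- Let 0 < r₀ < π/2 and b ≥ 0, and let f : ℝ → ℝ be twice continuously differentiable on [0,b] with: f(t) ≥ 0 for all t ∈ [0,b]; f''(t) + f(t) ≤ −cot r₀ for all t ∈ [0,b]; f(0) ≤ tan(r₀/2); and f'(0) ≤ 0. Then b ≤ r₀. -/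
/-!
Let `g t = (cos t - cos r₀) / sin r₀`, the solution of `g'' + g = -cot r₀` with `g 0 = tan (r₀/2)`,
`g' 0 = 0` and `g r₀ = 0`. Then `w = f - g` satisfies `w'' + w ≤ 0`, `w 0 ≤ 0` and `w' 0 ≤ 0`.
By Sturm comparison with `cos`, the Wronskian-type quantity `w' cos + w sin` is nonincreasing, hence
`≤ 0`, so `w / cos` is nonincreasing and `w ≤ w 0 · cos ≤ 0` on `[0, π/2)`. If `b > r₀`, then at
some `T ∈ (r₀, min b (π/2))` this gives `0 ≤ f T ≤ g T < 0`.
-/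

open Set Real

theorem Real.tan_half_eq_one_sub_cos_div_sin (x : ℝ) : tan (x / 2) = (1 - cos x) / sin x := by
  obtain ⟨y, rfl⟩ : ∃ y, x = 2 * y := ⟨x / 2, by ring⟩
  rw [mul_div_cancel_left₀ y two_ne_zero, tan_eq_sin_div_cos, cos_two_mul', sin_two_mul,
    ← sin_sq_add_cos_sq y]
  rcases eq_or_ne (sin y) 0 with hs | hs
  · simp [hs]
  rcases eq_or_ne (cos y) 0 with hc | hc
  · simp [hc]
  field_simp
  ring

section SturmComparison

variable {T : ℝ} {w w' w'' : ℝ → ℝ}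

theorem antitoneOn_deriv_mul_cos_add_mul_sin (hT : T ≤ π / 2)
    (hw : ∀ t ∈ Icc 0 T, HasDerivWithinAt w (w' t) (Icc 0 T) t)
    (hw' : ∀ t ∈ Icc 0 T, HasDerivWithinAt w' (w'' t) (Icc 0 T) t)
    (hode : ∀ t ∈ Icc 0 T, w'' t + w t ≤ 0) :
    AntitoneOn (fun t => w' t * cos t + w t * sin t) (Icc 0 T) := by
  have hderiv : ∀ t ∈ Icc 0 T, HasDerivWithinAt (fun t => w' t * cos t + w t * sin t)
      ((w'' t + w t) * cos t) (Icc 0 T) t := fun t ht => by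
    refine (((hw' t ht).mul (hasDerivAt_cos t).hasDerivWithinAt).add
      ((hw t ht).mul (hasDerivAt_sin t).hasDerivWithinAt)).congr_deriv ?_
    ring
  refine antitoneOn_of_hasDerivWithinAt_nonpos (convex_Icc 0 T)
    (fun t ht => (hderiv t ht).continuousWithinAt)
    (fun t ht => (hderiv t (interior_subset ht)).mono interior_subset) fun t ht => ?_
  rw [interior_Icc] at ht
  exact mul_nonpos_of_nonpos_of_nonneg (hode t (Ioo_subset_Icc_self ht))
    (cos_nonneg_of_mem_Icc ⟨by linarith [ht.1, pi_pos], by linarith [ht.2]⟩)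

theorem le_apply_zero_mul_cos_of_deriv2_add_nonpos (hT : T < π / 2)
    (hw : ∀ t ∈ Icc 0 T, HasDerivWithinAt w (w' t) (Icc 0 T) t)
    (hw' : ∀ t ∈ Icc 0 T, HasDerivWithinAt w' (w'' t) (Icc 0 T) t)
    (hode : ∀ t ∈ Icc 0 T, w'' t + w t ≤ 0) (h'0 : w' 0 ≤ 0) :
    ∀ t ∈ Icc 0 T, w t ≤ w 0 * cos t := by
  have hcos : ∀ t ∈ Icc 0 T, 0 < cos t := fun t ht =>
    cos_pos_of_mem_Ioo ⟨by linarith [ht.1, pi_pos], by linarith [ht.2]⟩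
  have hwronskian : ∀ t ∈ Icc 0 T, w' t * cos t + w t * sin t ≤ 0 := fun t ht => by
    have := antitoneOn_deriv_mul_cos_add_mul_sin hT.le hw hw' hode
      (left_mem_Icc.2 (ht.1.trans ht.2)) ht ht.1
    simp only [cos_zero, sin_zero, mul_one, mul_zero, add_zero] at this
    exact this.trans h'0
  have hderiv : ∀ t ∈ Icc 0 T, HasDerivWithinAt (fun t => w t / cos t)
      ((w' t * cos t + w t * sin t) / cos t ^ 2) (Icc 0 T) t := fun t ht => by
    refine ((hw t ht).div (hasDerivAt_cos t).hasDerivWithinAt (hcos t ht).ne').congr_deriv ?_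
    ring
  have hanti : AntitoneOn (fun t => w t / cos t) (Icc 0 T) :=
    antitoneOn_of_hasDerivWithinAt_nonpos (convex_Icc 0 T)
      (fun t ht => (hderiv t ht).continuousWithinAt)
      (fun t ht => (hderiv t (interior_subset ht)).mono interior_subset) fun t ht =>
        div_nonpos_of_nonpos_of_nonneg (hwronskian t (interior_subset ht)) (sq_nonneg _)
  intro t ht
  have := hanti (left_mem_Icc.2 (ht.1.trans ht.2)) ht ht.1
  simp only [cos_zero, div_one] at this
  rwa [div_le_iff₀ (hcos t ht)] at this

end SturmComparison

theorem radius_bound_curvature_one_general (r₀ : ℝ) (hr₀ : 0 < r₀) (hr₀' : r₀ < π / 2)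
    (b : ℝ)
    (f f' f'' : ℝ → ℝ)
    (hf1 : ∀ t ∈ Icc (0 : ℝ) b, HasDerivWithinAt f (f' t) (Icc 0 b) t)
    (hf2 : ∀ t ∈ Icc (0 : ℝ) b, HasDerivWithinAt f' (f'' t) (Icc 0 b) t)
    (hpos : ∀ t ∈ Icc (0 : ℝ) b, 0 ≤ f t)
    (hode : ∀ t ∈ Icc (0 : ℝ) b, f'' t + f t ≤ -(Real.cos r₀ / Real.sin r₀))
    (h0 : f 0 ≤ Real.tan (r₀ / 2)) (h'0 : f' 0 ≤ 0) :
    b ≤ r₀ := by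
  by_contra! hb
  obtain ⟨T, hr₀T, hTb, hTπ⟩ : ∃ T, r₀ < T ∧ T ≤ b ∧ T < π / 2 :=
    ⟨min b ((r₀ + π / 2) / 2), lt_min hb (by linarith), min_le_left _ _,
      (min_le_right _ _).trans_lt (by linarith)⟩
  have hsin : 0 < sin r₀ := sin_pos_of_pos_of_lt_pi hr₀ (by linarith [pi_pos])
  have hsub : Icc 0 T ⊆ Icc 0 b := Icc_subset_Icc le_rfl hTb
  have hT : T ∈ Icc 0 T := right_mem_Icc.2 (by linarith)
  have hcomp := le_apply_zero_mul_cos_of_deriv2_add_nonpos hTπ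
    (w := fun t => f t - (cos t - cos r₀) / sin r₀)
    (fun t ht => ((hf1 t (hsub ht)).mono hsub).sub
      (((hasDerivAt_cos t).sub_const _).div_const _).hasDerivWithinAt)
    (fun t ht => ((hf2 t (hsub ht)).mono hsub).sub
      ((hasDerivAt_sin t).neg.div_const _).hasDerivWithinAt)
    (fun t ht => by
      have hg : -cos t / sin r₀ + (cos t - cos r₀) / sin r₀ = -(cos r₀ / sin r₀) := by ring
      linarith [hode t (hsub ht)])
    (by simpa using h'0) T hT
  have hw0 : f 0 - (cos 0 - cos r₀) / sin r₀ ≤ 0 := by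
    rwa [cos_zero, ← tan_half_eq_one_sub_cos_div_sin, sub_nonpos]
  have hcosT : 0 < cos T := cos_pos_of_mem_Ioo ⟨by linarith [pi_pos], hTπ⟩
  have hgT : (cos T - cos r₀) / sin r₀ < 0 := div_neg_of_neg_of_pos
    (sub_neg.2 (cos_lt_cos_of_nonneg_of_le_pi hr₀.le (by linarith [pi_pos]) hr₀T)) hsin
  nlinarith [hpos T (hsub hT), mul_nonpos_of_nonpos_of_nonneg hw0 hcosT.le]

/-- Curvature `k = 1` radius bound: if `f ≥ 0` and `f'' + f ≤ -cot r₀` on `[0,b]`,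
`f(0) ≤ tan (r₀/2)`, and `f'(0) ≤ 0`, where `0 < r₀ < π/2`, then `b ≤ r₀`. -/
theorem radius_bound_curvature_one (r₀ : ℝ) (hr₀ : 0 < r₀) (hr₀' : r₀ < π / 2)
    (b : ℝ) (hb : 0 ≤ b)
    (f f' f'' : ℝ → ℝ)
    (hf1 : ∀ t ∈ Icc (0 : ℝ) b, HasDerivWithinAt f (f' t) (Icc 0 b) t)
    (hf2 : ∀ t ∈ Icc (0 : ℝ) b, HasDerivWithinAt f' (f'' t) (Icc 0 b) t)
    (hfc : ContinuousOn f'' (Icc 0 b))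
    (hpos : ∀ t ∈ Icc (0 : ℝ) b, 0 ≤ f t)
    (hode : ∀ t ∈ Icc (0 : ℝ) b, f'' t + f t ≤ -(Real.cos r₀ / Real.sin r₀))
    (h0 : f 0 ≤ Real.tan (r₀ / 2)) (h'0 : f' 0 ≤ 0) :
    b ≤ r₀ :=
  radius_bound_curvature_one_general r₀ hr₀ hr₀' b f f' f'' hf1 hf2 hpos hode h0 h'0
end

section
/- Let r₀ > 0 and b ≥ 0, and let f : ℝ → ℝ be twice continuously differentiable on [0,b] with: f(t) ≥ 0 for all t ∈ [0,b]; f''(t) − f(t) ≤ −coth r₀ for all t ∈ [0,b] (where coth x = cosh x / sinh x); f(0) ≤ tanh(r₀/2); and f'(0) ≤ 0. Then b ≤ r₀. -/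
open Set Real

/-! With `s = sinh r₀`, the function `g t = f t + (cosh t - cosh r₀) / s` satisfies `g'' ≤ g`,
`g 0 ≤ 0` (because `tanh (r₀/2) = (cosh r₀ - 1) / sinh r₀`) and `g' 0 ≤ 0`. Factoring
`d²/dt² - 1 = (d/dt - 1)(d/dt + 1)` and integrating each first-order inequality against an
exponential weight gives `g ≤ 0` on `[0, b]`; at `t = b` this reads
`0 ≤ f b ≤ (cosh r₀ - cosh b) / s`, so `b ≤ r₀`. -/

theorem Real.tanh_half (x : ℝ) : tanh (x / 2) = (cosh x - 1) / sinh x := by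
  obtain ⟨y, rfl⟩ : ∃ y, x = 2 * y := ⟨x / 2, by ring⟩
  rw [show 2 * y / 2 = y by ring, cosh_two_mul, sinh_two_mul, tanh_eq_sinh_div_cosh, cosh_sq]
  rcases eq_or_ne (sinh y) 0 with hy | hy
  · simp [hy]
  · have := cosh_pos y
    field_simp
    ring

section Comparison

variable {a b : ℝ}

theorem antitoneOn_Icc_of_hasDerivWithinAt_nonpos {h h' : ℝ → ℝ}
    (hh : ∀ t ∈ Icc a b, HasDerivWithinAt h (h' t) (Icc a b) t)
    (hh' : ∀ t ∈ Icc a b, h' t ≤ 0) : AntitoneOn h (Icc a b) := by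
  refine antitoneOn_of_hasDerivWithinAt_nonpos (f' := h') (convex_Icc a b)
    (fun t ht => (hh t ht).continuousWithinAt) ?_ ?_ <;> rw [interior_Icc] <;> intro t ht
  · exact (hh t (Ioo_subset_Icc_self ht)).mono Ioo_subset_Icc_self
  · exact hh' t (Ioo_subset_Icc_self ht)

theorem nonpos_of_hasDerivWithinAt_le_mul_self {c : ℝ} {h h' : ℝ → ℝ}
    (hh : ∀ t ∈ Icc a b, HasDerivWithinAt h (h' t) (Icc a b) t)
    (hle : ∀ t ∈ Icc a b, h' t ≤ c * h t) (ha : h a ≤ 0) :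
    ∀ t ∈ Icc a b, h t ≤ 0 := by
  have hweighted : AntitoneOn (fun t => exp (-c * t) * h t) (Icc a b) := by
    refine antitoneOn_Icc_of_hasDerivWithinAt_nonpos
      (h' := fun t => exp (-c * t) * (h' t - c * h t)) (fun t ht => ?_) (fun t ht => ?_)
    · exact (((hasDerivAt_id' t).const_mul (-c)).exp.hasDerivWithinAt.mul (hh t ht)).congr_deriv
        (by ring)
    · exact mul_nonpos_of_nonneg_of_nonpos (exp_pos _).le (by linarith [hle t ht])
  intro t ht
  have hweighted_le := hweighted (left_mem_Icc.2 (ht.1.trans ht.2)) ht ht.1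
  exact nonpos_of_mul_nonpos_right
    (hweighted_le.trans (mul_nonpos_of_nonneg_of_nonpos (exp_pos _).le ha)) (exp_pos _)

theorem nonpos_of_hasDerivWithinAt_hasDerivWithinAt_le_self {g g' g'' : ℝ → ℝ}
    (hg : ∀ t ∈ Icc a b, HasDerivWithinAt g (g' t) (Icc a b) t)
    (hg' : ∀ t ∈ Icc a b, HasDerivWithinAt g' (g'' t) (Icc a b) t)
    (hle : ∀ t ∈ Icc a b, g'' t ≤ g t) (ha : g a ≤ 0) (ha' : g' a ≤ 0) :
    ∀ t ∈ Icc a b, g t ≤ 0 := by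
  have hsum : ∀ t ∈ Icc a b, g' t + g t ≤ 0 :=
    nonpos_of_hasDerivWithinAt_le_mul_self (c := 1) (fun t ht => (hg' t ht).add (hg t ht))
      (fun t ht => by linarith [hle t ht]) (by linarith)
  exact nonpos_of_hasDerivWithinAt_le_mul_self (c := -1) hg
    (fun t ht => by linarith [hsum t ht]) ha

end Comparison

theorem radius_bound_curvature_minus_one_general (r₀ : ℝ) (hr₀ : 0 < r₀)
    (b : ℝ) (hb : 0 ≤ b)
    (f f' f'' : ℝ → ℝ)
    (hf1 : ∀ t ∈ Icc (0 : ℝ) b, HasDerivWithinAt f (f' t) (Icc 0 b) t)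
    (hf2 : ∀ t ∈ Icc (0 : ℝ) b, HasDerivWithinAt f' (f'' t) (Icc 0 b) t)
    (hpos : ∀ t ∈ Icc (0 : ℝ) b, 0 ≤ f t)
    (hode : ∀ t ∈ Icc (0 : ℝ) b, f'' t - f t ≤ -(Real.cosh r₀ / Real.sinh r₀))
    (h0 : f 0 ≤ Real.tanh (r₀ / 2)) (h'0 : f' 0 ≤ 0) :
    b ≤ r₀ := by
  rw [tanh_half] at h0
  set s := sinh r₀
  have hs : 0 < s := sinh_pos_iff.2 hr₀
  have hg_nonpos := nonpos_of_hasDerivWithinAt_hasDerivWithinAt_le_self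
    (g := fun t => f t + (cosh t - cosh r₀) / s) (g' := fun t => f' t + sinh t / s)
    (g'' := fun t => f'' t + cosh t / s)
    (fun t ht => (hf1 t ht).add (((hasDerivAt_cosh t).sub_const _).div_const s).hasDerivWithinAt)
    (fun t ht => (hf2 t ht).add ((hasDerivAt_sinh t).div_const s).hasDerivWithinAt)
    (fun t ht => by linarith [hode t ht, sub_div (cosh t) (cosh r₀) s])
    (by rw [cosh_zero]; linarith [sub_div 1 (cosh r₀) s, sub_div (cosh r₀) 1 s])
    (by simpa using h'0)
  have hb_mem : b ∈ Icc 0 b := right_mem_Icc.2 hb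
  have hcosh : cosh b ≤ cosh r₀ := by
    have : (cosh b - cosh r₀) / s ≤ 0 := by linarith [hg_nonpos b hb_mem, hpos b hb_mem]
    linarith [(div_le_iff₀ hs).1 this]
  simpa [abs_of_nonneg hb, abs_of_pos hr₀] using cosh_le_cosh.1 hcosh

/-- Curvature `k = -1` radius bound: if `f ≥ 0` and `f'' - f ≤ -coth r₀` on `[0,b]`,
`f(0) ≤ tanh (r₀/2)`, and `f'(0) ≤ 0`, where `r₀ > 0`, then `b ≤ r₀`. -/
theorem radius_bound_curvature_minus_one (r₀ : ℝ) (hr₀ : 0 < r₀)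
    (b : ℝ) (hb : 0 ≤ b)
    (f f' f'' : ℝ → ℝ)
    (hf1 : ∀ t ∈ Icc (0 : ℝ) b, HasDerivWithinAt f (f' t) (Icc 0 b) t)
    (hf2 : ∀ t ∈ Icc (0 : ℝ) b, HasDerivWithinAt f' (f'' t) (Icc 0 b) t)
    (hfc : ContinuousOn f'' (Icc 0 b))
    (hpos : ∀ t ∈ Icc (0 : ℝ) b, 0 ≤ f t)
    (hode : ∀ t ∈ Icc (0 : ℝ) b, f'' t - f t ≤ -(Real.cosh r₀ / Real.sinh r₀))
    (h0 : f 0 ≤ Real.tanh (r₀ / 2)) (h'0 : f' 0 ≤ 0) :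
    b ≤ r₀ :=
  radius_bound_curvature_minus_one_general r₀ hr₀ b hb f f' f'' hf1 hf2 hpos hode h0 h'0
end

section
/- Let λ₀ > 0 and b ≥ 0, and let f : ℝ → ℝ be twice continuously differentiable on [0,b] with: f(t) ≥ 0 for all t ∈ [0,b]; f''(t) ≤ −λ₀ for all t ∈ [0,b]; f(0) ≤ 1/(2λ₀); and f'(0) ≤ 0. Then b ≤ 1/λ₀. -/
/-!
Since `f'' ≤ -λ₀`, the function `f` lies below its second-order Taylor polynomial at `0`:
`f b ≤ f 0 + f' 0 * b - λ₀ b² / 2 ≤ 1 / (2λ₀) - λ₀ b² / 2`. As `f b ≥ 0`, this gives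
`(λ₀ b)² ≤ 1`, i.e. `b ≤ 1/λ₀`.
-/

open Set

theorem antitoneOn_sub_of_hasDerivWithinAt_le {D : Set ℝ} (hD : Convex ℝ D)
    {f f' g g' : ℝ → ℝ} (hf : ∀ x ∈ D, HasDerivWithinAt f (f' x) D x)
    (hg : ∀ x ∈ D, HasDerivWithinAt g (g' x) D x) (hle : ∀ x ∈ interior D, f' x ≤ g' x) :
    AntitoneOn (fun x => f x - g x) D :=
  antitoneOn_of_hasDerivWithinAt_nonpos hD
    (fun x hx => ((hf x hx).sub (hg x hx)).continuousWithinAt)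
    (fun x hx => ((hf x (interior_subset hx)).sub (hg x (interior_subset hx))).mono
      interior_subset)
    (fun x hx => sub_nonpos.2 (hle x hx))

theorem le_taylor_of_second_deriv_le {a b K : ℝ} {f f' f'' : ℝ → ℝ}
    (hf : ∀ x ∈ Icc a b, HasDerivWithinAt f (f' x) (Icc a b) x)
    (hf' : ∀ x ∈ Icc a b, HasDerivWithinAt f' (f'' x) (Icc a b) x)
    (hK : ∀ x ∈ Ioo a b, f'' x ≤ K) {t : ℝ} (ht : t ∈ Icc a b) :
    f t ≤ f a + f' a * (t - a) + K * (t - a) ^ 2 / 2 := by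
  have ha : a ∈ Icc a b := ⟨le_rfl, ht.1.trans ht.2⟩
  have hlin : ∀ x ∈ Icc a b, HasDerivWithinAt (fun x => K * x) K (Icc a b) x := fun x _ =>
    ((hasDerivAt_id x).const_mul K).hasDerivWithinAt.congr_deriv (mul_one K)
  have hslope : ∀ x ∈ Icc a b, f' x ≤ f' a + K * (x - a) := by
    intro x hx
    have := antitoneOn_sub_of_hasDerivWithinAt_le (convex_Icc a b) hf' hlin
      (by simpa only [interior_Icc] using hK) ha hx hx.1
    simp only at this
    linarith
  have hquad : ∀ x ∈ Icc a b, HasDerivWithinAt (fun x => f' a * (x - a) + K * (x - a) ^ 2 / 2)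
      (f' a + K * (x - a)) (Icc a b) x := by
    intro x _
    have hx : HasDerivAt (fun x => x - a) 1 x := (hasDerivAt_id x).sub_const a
    exact (((hx.const_mul (f' a)).add ((hx.pow 2).const_mul K |>.div_const 2)).congr_deriv
      (by ring)).hasDerivWithinAt
  have := antitoneOn_sub_of_hasDerivWithinAt_le (convex_Icc a b) hf hquad
    (fun x hx => hslope x (interior_subset hx)) ha ht ht.1
  simp only [sub_self, mul_zero, zero_pow two_ne_zero, zero_div, add_zero, sub_zero] at this
  linarith

theorem radius_bound_curvature_zero_general (lam0 : ℝ) (hlam0 : 0 < lam0)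
    (b : ℝ) (hb : 0 ≤ b)
    (f f' f'' : ℝ → ℝ)
    (hf1 : ∀ t ∈ Icc (0 : ℝ) b, HasDerivWithinAt f (f' t) (Icc 0 b) t)
    (hf2 : ∀ t ∈ Icc (0 : ℝ) b, HasDerivWithinAt f' (f'' t) (Icc 0 b) t)
    (hpos : ∀ t ∈ Icc (0 : ℝ) b, 0 ≤ f t)
    (hode : ∀ t ∈ Icc (0 : ℝ) b, f'' t ≤ -lam0)
    (h0 : f 0 ≤ 1 / (2 * lam0)) (h'0 : f' 0 ≤ 0) :
    b ≤ 1 / lam0 := by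
  have hbmem : b ∈ Icc (0 : ℝ) b := ⟨hb, le_rfl⟩
  have htaylor := le_taylor_of_second_deriv_le hf1 hf2
    (fun t ht => hode t (Ioo_subset_Icc_self ht)) hbmem
  have hsq : (lam0 * b) ^ 2 ≤ 1 := by
    have h2 : lam0 * (1 / (2 * lam0)) = 1 / 2 := by field_simp
    nlinarith [hpos b hbmem, mul_nonpos_of_nonpos_of_nonneg h'0 hb,
      mul_le_mul_of_nonneg_left h0 hlam0.le]
  have hprod : lam0 * b ≤ 1 := (pow_le_one_iff_of_nonneg (by positivity) two_ne_zero).1 hsq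
  rwa [le_div_iff₀ hlam0, mul_comm]

/-- Curvature `k = 0` radius bound: if `f ≥ 0` and `f'' ≤ -λ₀` on `[0,b]`,
`f(0) ≤ 1/(2λ₀)`, and `f'(0) ≤ 0`, where `λ₀ > 0`, then `b ≤ 1/λ₀`. -/
theorem radius_bound_curvature_zero (lam0 : ℝ) (hlam0 : 0 < lam0)
    (b : ℝ) (hb : 0 ≤ b)
    (f f' f'' : ℝ → ℝ)
    (hf1 : ∀ t ∈ Icc (0 : ℝ) b, HasDerivWithinAt f (f' t) (Icc 0 b) t)
    (hf2 : ∀ t ∈ Icc (0 : ℝ) b, HasDerivWithinAt f' (f'' t) (Icc 0 b) t)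
    (hfc : ContinuousOn f'' (Icc 0 b))
    (hpos : ∀ t ∈ Icc (0 : ℝ) b, 0 ≤ f t)
    (hode : ∀ t ∈ Icc (0 : ℝ) b, f'' t ≤ -lam0)
    (h0 : f 0 ≤ 1 / (2 * lam0)) (h'0 : f' 0 ≤ 0) :
    b ≤ 1 / lam0 :=
  radius_bound_curvature_zero_general lam0 hlam0 b hb f f' f'' hf1 hf2 hpos hode h0 h'0
end
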